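/- arXiv:1802.08339 — 2 statements merged into one kernel-verified Lean document; each statement's English description precedes it below -/
import Mathlib

section
/- Fix τ > 0, an integer n ≥ 1, and event times 0 < T₁ < ⋯ < T_n < τ, and let N(t) = #{i ∈ {1,…,n} : T_i ≤ t} for 0 ≤ t ≤ τ. Then the integral ∫₀¹ (N(sτ) − sN(τ))²/(s(1−s)) ds is finite and equals Σ_{i=1}^{n−1} [ (n−i)² ln((τ − T_i)/(τ − T_{i+1})) + i² ln(T_{i+1}/T_i) ] + n² [ ln(τ/(τ − T₁)) + ln(τ/T_n) − 1 ]. -/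
/-!
Pad the event times with `T₀ = 0` and `T_{n+1} = τ`. For `T_i/τ < s < T_{i+1}/τ` the count is
`N(sτ) = i`, so there the integrand is `(i - sn)²/(s(1-s)) = -n² + i²/s + (n-i)²/(1-s)`.
Each of the `n + 1` pieces integrates to logarithms; the constant terms telescope to `-n²`.
The singular terms `i²/s` and `(n-i)²/(1-s)` vanish on the first and last piece respectively,
which is why the integral is finite.
-/

open Filter Set

noncomputable section

/-- The (deterministic) counting function of the event times `T 1 < T 2 < ⋯ < T n`:
`countN n T t = #{i ∈ {1,…,n} : T i ≤ t}`. -/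
def countN (n : ℕ) (T : ℕ → ℝ) (t : ℝ) : ℕ :=
  Set.ncard {i : ℕ | 1 ≤ i ∧ i ≤ n ∧ T i ≤ t}

open MeasureTheory Real

section ReciprocalIntegrals

variable {A B : ℝ}

theorem intervalIntegrable_const_mul_inv_and_integral (c : ℝ) (hA : c = 0 ∨ 0 < A) (hAB : A ≤ B) :
    IntervalIntegrable (fun s => c * s⁻¹) volume A B ∧
      ∫ s in A..B, c * s⁻¹ = c * log (B / A) := by
  rcases hA with rfl | hA
  · simp
  · refine ⟨(intervalIntegral.intervalIntegrable_inv (fun x hx => ?_)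
      continuousOn_id).const_mul c, ?_⟩
    · rw [uIcc_of_le hAB] at hx
      exact (hA.trans_le hx.1).ne'
    · rw [intervalIntegral.integral_const_mul, integral_inv_of_pos hA (hA.trans_le hAB)]

theorem intervalIntegrable_const_mul_one_sub_inv_and_integral (c : ℝ) (hB : c = 0 ∨ B < 1)
    (hAB : A ≤ B) :
    IntervalIntegrable (fun s => c * (1 - s)⁻¹) volume A B ∧
      ∫ s in A..B, c * (1 - s)⁻¹ = c * log ((1 - A) / (1 - B)) := by
  have h := intervalIntegrable_const_mul_inv_and_integral c (hB.imp_right sub_pos.2)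
    (sub_le_sub_left hAB 1)
  refine ⟨by simpa using (h.1.comp_sub_left 1).symm, ?_⟩
  rw [intervalIntegral.integral_comp_sub_left (fun s => c * s⁻¹), h.2]

end ReciprocalIntegrals

theorem sq_sub_mul_div_mul_one_sub (x y : ℝ) {s : ℝ} (hs₀ : s ≠ 0) (hs₁ : s ≠ 1) :
    (x - s * y) ^ 2 / (s * (1 - s)) = -y ^ 2 + x ^ 2 * s⁻¹ + (y - x) ^ 2 * (1 - s)⁻¹ := by
  have : 1 - s ≠ 0 := sub_ne_zero.2 hs₁.symm
  field_simp
  ring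

theorem intervalIntegrable_and_integral_of_eqOn_sq_sub_mul_div {f : ℝ → ℝ} {A B x y : ℝ}
    (hA₀ : 0 ≤ A) (hAB : A ≤ B) (hB₁ : B ≤ 1) (hA : x = 0 ∨ 0 < A) (hB : x = y ∨ B < 1)
    (hf : EqOn f (fun s => (x - s * y) ^ 2 / (s * (1 - s))) (Ioo A B)) :
    IntervalIntegrable f volume A B ∧
      ∫ s in A..B, f s =
        x ^ 2 * log (B / A) + (y - x) ^ 2 * log ((1 - A) / (1 - B)) - y ^ 2 * (B - A) := by
  have hfg : EqOn f (fun s => -y ^ 2 + x ^ 2 * s⁻¹ + (y - x) ^ 2 * (1 - s)⁻¹) (Ioo A B) :=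
    fun s hs => (hf hs).trans <| sq_sub_mul_div_mul_one_sub x y
      (hA₀.trans_lt hs.1).ne' (hs.2.trans_le hB₁).ne
  obtain ⟨hi₁, he₁⟩ := intervalIntegrable_const_mul_inv_and_integral (x ^ 2)
    (hA.imp_left fun h => by simp [h]) hAB
  obtain ⟨hi₂, he₂⟩ := intervalIntegrable_const_mul_one_sub_inv_and_integral ((y - x) ^ 2)
    (hB.imp_left fun h => by simp [h]) hAB
  have hi₀ : IntervalIntegrable (fun _ => -y ^ 2) volume A B := intervalIntegrable_const
  refine ⟨(intervalIntegrable_congr_uIoo (uIoo_of_le hAB ▸ hfg)).2 ((hi₀.add hi₁).add hi₂), ?_⟩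
  rw [intervalIntegral.integral_congr_Ioo_of_le hAB hfg,
    intervalIntegral.integral_add (hi₀.add hi₁) hi₂, intervalIntegral.integral_add hi₀ hi₁,
    he₁, he₂, intervalIntegral.integral_const, smul_eq_mul]
  ring

theorem countN_eq_of_forall {n k : ℕ} {T : ℕ → ℝ} {t : ℝ} (hk : k ≤ n)
    (h : ∀ j, 1 ≤ j → j ≤ n → (T j ≤ t ↔ j ≤ k)) : countN n T t = k := by
  have hset : {j : ℕ | 1 ≤ j ∧ j ≤ n ∧ T j ≤ t} = Finset.Icc 1 k := by
    ext j
    simp only [mem_ofPred_eq, Finset.coe_Icc, mem_Icc]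
    constructor
    · rintro ⟨hj₁, hjn, hjt⟩
      exact ⟨hj₁, (h j hj₁ hjn).1 hjt⟩
    · rintro ⟨hj₁, hjk⟩
      exact ⟨hj₁, hjk.trans hk, (h j hj₁ (hjk.trans hk)).2 hjk⟩
  rw [countN, hset, ncard_coe_finset, Nat.card_Icc, Nat.add_sub_cancel]

def paddedTimes (n : ℕ) (τ : ℝ) (T : ℕ → ℝ) (i : ℕ) : ℝ :=
  if i = 0 then 0 else if i ≤ n then T i else τ

section PaddedTimes

variable {n : ℕ} {τ : ℝ} {T : ℕ → ℝ}

@[simp]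
theorem paddedTimes_zero : paddedTimes n τ T 0 = 0 := rfl

theorem paddedTimes_of_le {i : ℕ} (hi₁ : 1 ≤ i) (hin : i ≤ n) : paddedTimes n τ T i = T i := by
  simp [paddedTimes, Nat.one_le_iff_ne_zero.1 hi₁, hin]

@[simp]
theorem paddedTimes_add_one : paddedTimes n τ T (n + 1) = τ := by
  simp [paddedTimes]

theorem strictMonoOn_paddedTimes (hn : 1 ≤ n) (hT₁ : 0 < T 1)
    (hmono : ∀ i, 1 ≤ i → i < n → T i < T (i + 1)) (hTn : T n < τ) :
    StrictMonoOn (paddedTimes n τ T) (Iic (n + 1)) := by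
  refine strictMonoOn_of_lt_add_one ordConnected_Iic fun i _ _ hi => ?_
  rcases Nat.eq_zero_or_pos i with rfl | hi₀
  · simpa [paddedTimes_of_le le_rfl hn] using hT₁
  rcases (Nat.le_of_lt_succ (mem_Iic.1 hi)).lt_or_eq with hin | rfl
  · rw [paddedTimes_of_le hi₀ hin.le, paddedTimes_of_le (i := i + 1) (by omega) hin]
    exact hmono i hi₀ hin
  · rwa [paddedTimes_of_le hi₀ le_rfl, paddedTimes_add_one]

local notation "S" => paddedTimes n τ T

theorem pos_of_strictMonoOn_paddedTimes (hS : StrictMonoOn S (Iic (n + 1))) : 0 < τ := by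
  simpa using hS (mem_Iic.2 (Nat.zero_le _)) (mem_Iic.2 le_rfl) (Nat.succ_pos n)

theorem countN_eq_of_mem_Ioo (hS : StrictMonoOn S (Iic (n + 1))) {i : ℕ} (hin : i ≤ n) {t : ℝ}
    (ht : t ∈ Ioo (S i) (S (i + 1))) : countN n T t = i := by
  refine countN_eq_of_forall hin fun j hj₁ hjn => ?_
  have hj : j ∈ Iic (n + 1) := mem_Iic.2 (by omega)
  rw [← paddedTimes_of_le (τ := τ) (T := T) hj₁ hjn]
  constructor
  · intro hjt
    by_contra! hij
    have := hS.monotoneOn (mem_Iic.2 (by omega)) hj (Nat.succ_le_of_lt hij)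
    linarith [ht.2]
  · intro hji
    exact ((hS.monotoneOn hj (mem_Iic.2 (by omega)) hji).trans_lt ht.1).le

theorem countN_eq_self (hS : StrictMonoOn S (Iic (n + 1))) : countN n T τ = n := by
  refine countN_eq_of_forall le_rfl fun j hj₁ hjn => iff_of_true ?_ hjn
  rw [← paddedTimes_of_le (τ := τ) (T := T) hj₁ hjn]
  simpa using (hS (mem_Iic.2 (by omega : j ≤ n + 1)) (mem_Iic.2 le_rfl) (by omega)).le

theorem countN_bridge_integral_piece (hS : StrictMonoOn S (Iic (n + 1))) {i : ℕ} (hin : i ≤ n) :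
    IntervalIntegrable
      (fun s => ((countN n T (s * τ) : ℝ) - s * (countN n T τ : ℝ)) ^ 2 / (s * (1 - s)))
      volume (S i / τ) (S (i + 1) / τ) ∧
    ∫ s in S i / τ..S (i + 1) / τ,
        ((countN n T (s * τ) : ℝ) - s * (countN n T τ : ℝ)) ^ 2 / (s * (1 - s)) =
      (i : ℝ) ^ 2 * log (S (i + 1) / S i) + ((n : ℝ) - i) ^ 2 * log ((τ - S i) / (τ - S (i + 1)))
        - (n : ℝ) ^ 2 * (S (i + 1) / τ - S i / τ) := by
  have hmem {j : ℕ} (hj : j ≤ n + 1) : j ∈ Iic (n + 1) := mem_Iic.2 hj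
  have hτ := pos_of_strictMonoOn_paddedTimes hS
  have hA₀ : 0 ≤ S i / τ := by
    refine div_nonneg ?_ hτ.le
    simpa using hS.monotoneOn (hmem (Nat.zero_le _)) (hmem (by omega)) (Nat.zero_le i)
  have hAB : S i / τ ≤ S (i + 1) / τ :=
    div_le_div_of_nonneg_right (hS.monotoneOn (hmem (by omega)) (hmem (by omega)) (by omega)) hτ.le
  have hB₁ : S (i + 1) / τ ≤ 1 := by
    refine (div_le_one hτ).2 ?_
    simpa using hS.monotoneOn (hmem (by omega)) (hmem le_rfl) (by omega : i + 1 ≤ n + 1)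
  have hA : (i : ℝ) = 0 ∨ 0 < S i / τ := by
    rcases Nat.eq_zero_or_pos i with rfl | hi₀
    · exact Or.inl Nat.cast_zero
    · refine Or.inr (div_pos ?_ hτ)
      simpa using hS (hmem (Nat.zero_le _)) (hmem (by omega)) hi₀
  have hB : (i : ℝ) = n ∨ S (i + 1) / τ < 1 := by
    rcases hin.lt_or_eq with hin | rfl
    · refine Or.inr ((div_lt_one hτ).2 ?_)
      simpa using hS (hmem (by omega)) (hmem le_rfl) (by omega : i + 1 < n + 1)
    · exact Or.inl rfl
  have hF : EqOn
      (fun s => ((countN n T (s * τ) : ℝ) - s * (countN n T τ : ℝ)) ^ 2 / (s * (1 - s)))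
      (fun s => ((i : ℝ) - s * n) ^ 2 / (s * (1 - s))) (Ioo (S i / τ) (S (i + 1) / τ)) := by
    intro s hs
    have hsτ : s * τ ∈ Ioo (S i) (S (i + 1)) :=
      ⟨(div_lt_iff₀ hτ).1 hs.1, (lt_div_iff₀ hτ).1 hs.2⟩
    simp only [countN_eq_of_mem_Ioo hS hin hsτ, countN_eq_self hS]
  have h := intervalIntegrable_and_integral_of_eqOn_sq_sub_mul_div hA₀ hAB hB₁ hA hB hF
  rwa [div_div_div_cancel_right₀ hτ.ne', one_sub_div hτ.ne', one_sub_div hτ.ne',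
    div_div_div_cancel_right₀ hτ.ne'] at h

theorem sum_bridge_piece_integrals (hn : 1 ≤ n) (hτ : τ ≠ 0) :
    ∑ i ∈ Finset.range (n + 1), ((i : ℝ) ^ 2 * log (S (i + 1) / S i)
        + ((n : ℝ) - i) ^ 2 * log ((τ - S i) / (τ - S (i + 1)))
        - (n : ℝ) ^ 2 * (S (i + 1) / τ - S i / τ)) =
      (∑ i ∈ Finset.Ico 1 n,
          (((n : ℝ) - i) ^ 2 * log ((τ - T i) / (τ - T (i + 1)))
            + (i : ℝ) ^ 2 * log (T (i + 1) / T i)))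
        + (n : ℝ) ^ 2 * (log (τ / (τ - T 1)) + log (τ / T n) - 1) := by
  have htel : ∑ i ∈ Finset.range (n + 1), (S (i + 1) / τ - S i / τ) = 1 := by
    simp [Finset.sum_range_sub (fun i => S i / τ), hτ]
  have hmid : ∀ i ∈ Finset.Ico 1 n,
      (i : ℝ) ^ 2 * log (S (i + 1) / S i) + ((n : ℝ) - i) ^ 2 * log ((τ - S i) / (τ - S (i + 1)))
        = ((n : ℝ) - i) ^ 2 * log ((τ - T i) / (τ - T (i + 1)))
            + (i : ℝ) ^ 2 * log (T (i + 1) / T i) := by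
    intro i hi
    obtain ⟨hi₁, hin⟩ := Finset.mem_Ico.1 hi
    rw [paddedTimes_of_le hi₁ hin.le, paddedTimes_of_le (i := i + 1) (by omega) hin, add_comm]
  rw [Finset.sum_sub_distrib, ← Finset.mul_sum, htel, Finset.sum_range_succ, Finset.range_eq_Ico,
    Finset.sum_eq_sum_Ico_succ_bot (by omega : 0 < n), Finset.sum_congr rfl hmid,
    paddedTimes_of_le le_rfl hn, paddedTimes_of_le hn le_rfl]
  simp only [Nat.cast_zero, paddedTimes_zero, paddedTimes_add_one, sub_zero, sub_self]
  ring

end PaddedTimes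

theorem integral_anderson_darling_counting_bridge_eq_general
    (τ : ℝ) (n : ℕ) (hn : 1 ≤ n) (T : ℕ → ℝ)
    (hT1 : 0 < T 1)
    (hmono : ∀ i, 1 ≤ i → i < n → T i < T (i + 1))
    (hTn : T n < τ) :
    IntervalIntegrable
      (fun s => ((countN n T (s * τ) : ℝ) - s * (countN n T τ : ℝ)) ^ 2 / (s * (1 - s)))
      MeasureTheory.volume 0 1 ∧
    (∫ s in (0:ℝ)..1,
        ((countN n T (s * τ) : ℝ) - s * (countN n T τ : ℝ)) ^ 2 / (s * (1 - s)))
      = (∑ i ∈ Finset.Ico 1 n,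
          (((n : ℝ) - i) ^ 2 * Real.log ((τ - T i) / (τ - T (i + 1)))
            + (i : ℝ) ^ 2 * Real.log (T (i + 1) / T i)))
        + (n : ℝ) ^ 2 *
            (Real.log (τ / (τ - T 1)) + Real.log (τ / T n) - 1) := by
  have hS := strictMonoOn_paddedTimes hn hT1 hmono hTn
  have hτ := (pos_of_strictMonoOn_paddedTimes hS).ne'
  have hpiece (i : ℕ) (hi : i < n + 1) := countN_bridge_integral_piece hS (Nat.le_of_lt_succ hi)
  have hknots : paddedTimes n τ T 0 / τ = 0 ∧ paddedTimes n τ T (n + 1) / τ = 1 := by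
    simp [hτ]
  have hint := IntervalIntegrable.trans_iterate fun i hi => (hpiece i hi).1
  have hsum := intervalIntegral.sum_integral_adjacent_intervals fun i hi => (hpiece i hi).1
  rw [hknots.1, hknots.2] at hint hsum
  refine ⟨hint, ?_⟩
  rw [← hsum, Finset.sum_congr rfl fun i hi => (hpiece i (Finset.mem_range.1 hi)).2]
  exact sum_bridge_piece_integrals hn hτ

/-- Fix `τ > 0`, an integer `n ≥ 1`, and event times
`0 < T₁ < ⋯ < T_n < τ`, and let `N(t) = #{i ∈ {1,…,n} : T_i ≤ t}`. Then the integral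
`∫₀¹ (N(sτ) − sN(τ))²/(s(1−s)) ds` is finite and equals
`Σ_{i=1}^{n−1} [ (n−i)² ln((τ−T_i)/(τ−T_{i+1})) + i² ln(T_{i+1}/T_i) ]
  + n² [ ln(τ/(τ−T₁)) + ln(τ/T_n) − 1 ]`. -/
theorem integral_anderson_darling_counting_bridge_eq
    (τ : ℝ) (hτ : 0 < τ) (n : ℕ) (hn : 1 ≤ n) (T : ℕ → ℝ)
    (hT1 : 0 < T 1)
    (hmono : ∀ i, 1 ≤ i → i < n → T i < T (i + 1))
    (hTn : T n < τ) :
    IntervalIntegrable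
      (fun s => ((countN n T (s * τ) : ℝ) - s * (countN n T τ : ℝ)) ^ 2 / (s * (1 - s)))
      MeasureTheory.volume 0 1 ∧
    (∫ s in (0:ℝ)..1,
        ((countN n T (s * τ) : ℝ) - s * (countN n T τ : ℝ)) ^ 2 / (s * (1 - s)))
      = (∑ i ∈ Finset.Ico 1 n,
          (((n : ℝ) - i) ^ 2 * Real.log ((τ - T i) / (τ - T (i + 1)))
            + (i : ℝ) ^ 2 * Real.log (T (i + 1) / T i)))
        + (n : ℝ) ^ 2 *
            (Real.log (τ / (τ - T 1)) + Real.log (τ / T n) - 1) :=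
  integral_anderson_darling_counting_bridge_eq_general τ n hn T hT1 hmono hTn
end
end

section
/- Fix τ > 0, a ∈ [0,1], an integer n ≥ 1, and event times 0 < T₁ < ⋯ < T_n < τ, and let N(t) = #{i ∈ {1,…,n} : T_i ≤ t}. Then τ [ ∫₀^a (N(sτ) − sN(τ)) ds − ∫_a^1 (N(sτ) − sN(τ)) ds ] = Σ_{i=1}^n |T_i − aτ| − (1/2 − a(1−a)) τ n. -/
/-!
Writing `N(sτ) − s N(τ) = ∑ᵢ (𝟙[Tᵢ/τ ≤ s] − s)` reduces the identity to a single event at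
`u = Tᵢ/τ ∈ [0, 1]`. The unit step at `u` has `max · u` as a right antiderivative, so both
integrals are explicit, and the event contributes `|Tᵢ − aτ| − (1/2 − a(1−a)) τ`.
-/

open Filter Set

noncomputable section

open intervalIntegral

theorem countN_eq_sum_ite (n : ℕ) (T : ℕ → ℝ) (t : ℝ) :
    (countN n T t : ℝ) = ∑ i ∈ Finset.Icc 1 n, if T i ≤ t then (1 : ℝ) else 0 := by
  have hset : {i : ℕ | 1 ≤ i ∧ i ≤ n ∧ T i ≤ t} = ↑((Finset.Icc 1 n).filter fun i => T i ≤ t) := by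
    ext i
    simp [and_assoc]
  rw [countN, hset, Set.ncard_coe_finset, Finset.sum_boole]

theorem countN_eq_self_of_le {n : ℕ} {T : ℕ → ℝ} {t : ℝ} (h : ∀ i ∈ Finset.Icc 1 n, T i ≤ t) :
    countN n T t = n := by
  have hsum := countN_eq_sum_ite n T t
  rw [Finset.sum_ite_of_true h] at hsum
  simpa using hsum

theorem monotoneOn_Icc_of_le_add_one {T : ℕ → ℝ} {n : ℕ}
    (hmono : ∀ i, 1 ≤ i → i < n → T i ≤ T (i + 1)) : MonotoneOn T (Icc 1 n) :=
  monotoneOn_of_le_succ ordConnected_Icc fun i _ hi hi' => by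
    rw [Order.succ_eq_add_one] at hi' ⊢
    exact hmono i hi.1 (by grind)

theorem monotone_ite_le (u : ℝ) : Monotone fun s : ℝ => if u ≤ s then (1 : ℝ) else 0 :=
  fun _ _ hxy => by grind

theorem hasDerivWithinAt_max_const_Ioi (u s : ℝ) :
    HasDerivWithinAt (fun t => max t u) (if u ≤ s then 1 else 0) (Ioi s) s := by
  split_ifs with h
  · refine (hasDerivWithinAt_id s _).congr_of_eventuallyEq ?_ (max_eq_left h)
    filter_upwards [self_mem_nhdsWithin] with t ht using max_eq_left (h.trans (le_of_lt ht))
  · have hsu : s < u := not_le.mp h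
    refine (hasDerivAt_const s u).hasDerivWithinAt.congr_of_eventuallyEq ?_ (max_eq_right hsu.le)
    filter_upwards [nhdsWithin_le_nhds (Iio_mem_nhds hsu)] with t ht
      using max_eq_right (le_of_lt ht)

theorem integral_ite_le (u b c : ℝ) :
    ∫ s in b..c, (if u ≤ s then (1 : ℝ) else 0) = max c u - max b u :=
  integral_eq_sub_of_hasDeriv_right (continuous_id.max continuous_const).continuousOn
    (fun s _ => hasDerivWithinAt_max_const_Ioi u s) (monotone_ite_le u).intervalIntegrable

theorem intervalIntegrable_ite_le_sub_id (u b c : ℝ) :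
    IntervalIntegrable (fun s : ℝ => (if u ≤ s then (1 : ℝ) else 0) - s)
      MeasureTheory.volume b c :=
  (monotone_ite_le u).intervalIntegrable.sub intervalIntegrable_id

theorem integral_ite_le_sub_id_sub_integral {u : ℝ} (hu : u ∈ Icc (0 : ℝ) 1) (a : ℝ) :
    (∫ s in (0 : ℝ)..a, ((if u ≤ s then (1 : ℝ) else 0) - s))
        - ∫ s in a..1, ((if u ≤ s then (1 : ℝ) else 0) - s)
      = |a - u| - (1 / 2 - a * (1 - a)) := by
  rw [integral_sub (monotone_ite_le u).intervalIntegrable intervalIntegrable_id,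
    integral_sub (monotone_ite_le u).intervalIntegrable intervalIntegrable_id]
  simp only [integral_ite_le, integral_id, max_eq_right hu.1, max_eq_left hu.2]
  rcases le_total a u with h | h
  · rw [max_eq_right h, abs_of_nonpos (sub_nonpos.mpr h)]
    ring
  · rw [max_eq_left h, abs_of_nonneg (sub_nonneg.mpr h)]
    ring

theorem mul_integral_ite_le_sub_id_sub_integral {τ t : ℝ} (hτ : 0 < τ) (ht : t ∈ Icc 0 τ)
    (a : ℝ) :
    τ * ((∫ s in (0 : ℝ)..a, ((if t / τ ≤ s then (1 : ℝ) else 0) - s))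
        - ∫ s in a..1, ((if t / τ ≤ s then (1 : ℝ) else 0) - s))
      = |t - a * τ| - (1 / 2 - a * (1 - a)) * τ := by
  have hu : t / τ ∈ Icc (0 : ℝ) 1 := ⟨div_nonneg ht.1 hτ.le, (div_le_one hτ).mpr ht.2⟩
  have habs : τ * |a - t / τ| = |t - a * τ| := by
    rw [← abs_of_pos hτ, ← abs_mul, abs_of_pos hτ, mul_sub, mul_div_cancel₀ t hτ.ne',
      abs_sub_comm, mul_comm]
  rw [integral_ite_le_sub_id_sub_integral hu, mul_sub, habs]
  ring

theorem integral_counting_bridge_extended_LR_eq_general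
    (τ : ℝ) (hτ : 0 < τ) (a : ℝ)
    (n : ℕ) (T : ℕ → ℝ)
    (hT1 : 0 < T 1)
    (hmono : ∀ i, 1 ≤ i → i < n → T i < T (i + 1))
    (hTn : T n < τ) :
    τ * ((∫ s in (0:ℝ)..a, ((countN n T (s * τ) : ℝ) - s * (countN n T τ : ℝ)))
          - ∫ s in a..1, ((countN n T (s * τ) : ℝ) - s * (countN n T τ : ℝ)))
      = (∑ i ∈ Finset.Icc 1 n, |T i - a * τ|)
        - (1 / 2 - a * (1 - a)) * τ * n := by
  have hT : ∀ i ∈ Finset.Icc 1 n, T i ∈ Icc 0 τ := fun i hi => by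
    have hi : i ∈ Icc 1 n := by simpa using hi
    have hTmono := monotoneOn_Icc_of_le_add_one fun i h1 h2 => (hmono i h1 h2).le
    exact ⟨hT1.le.trans (hTmono ⟨le_rfl, hi.1.trans hi.2⟩ hi hi.1),
      (hTmono hi ⟨hi.1.trans hi.2, le_rfl⟩ hi.2).trans hTn.le⟩
  have hbridge : ∀ s : ℝ, (countN n T (s * τ) : ℝ) - s * (countN n T τ : ℝ)
      = ∑ i ∈ Finset.Icc 1 n, ((if T i / τ ≤ s then (1 : ℝ) else 0) - s) := fun s => by
    simp [countN_eq_self_of_le fun i hi => (hT i hi).2, countN_eq_sum_ite, div_le_iff₀ hτ,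
      Finset.sum_sub_distrib, mul_comm]
  simp only [hbridge, integral_finsetSum fun i _ => intervalIntegrable_ite_le_sub_id _ _ _]
  rw [← Finset.sum_sub_distrib, Finset.mul_sum,
    Finset.sum_congr rfl fun i hi => mul_integral_ite_le_sub_id_sub_integral hτ (hT i hi) a]
  simp [Finset.sum_sub_distrib]
  ring

/-- Fix `τ > 0`, `a ∈ [0,1]`, an integer `n ≥ 1`, and event times
`0 < T₁ < ⋯ < T_n < τ`, and let `N(t) = #{i ∈ {1,…,n} : T_i ≤ t}`. Then
`τ [ ∫₀^a (N(sτ) − sN(τ)) ds − ∫_a^1 (N(sτ) − sN(τ)) ds ]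
   = Σ_{i=1}^n |T_i − aτ| − (1/2 − a(1−a)) τ n`. -/
theorem integral_counting_bridge_extended_LR_eq
    (τ : ℝ) (hτ : 0 < τ) (a : ℝ) (ha : a ∈ Set.Icc (0:ℝ) 1)
    (n : ℕ) (hn : 1 ≤ n) (T : ℕ → ℝ)
    (hT1 : 0 < T 1)
    (hmono : ∀ i, 1 ≤ i → i < n → T i < T (i + 1))
    (hTn : T n < τ) :
    τ * ((∫ s in (0:ℝ)..a, ((countN n T (s * τ) : ℝ) - s * (countN n T τ : ℝ)))
          - ∫ s in a..1, ((countN n T (s * τ) : ℝ) - s * (countN n T τ : ℝ)))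
      = (∑ i ∈ Finset.Icc 1 n, |T i - a * τ|)
        - (1 / 2 - a * (1 - a)) * τ * n :=
  integral_counting_bridge_extended_LR_eq_general τ hτ a n T hT1 hmono hTn
end
end
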